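/- arXiv:2512.18634 — 2 statements merged into one kernel-verified Lean document; each statement's English description precedes it below -/
import Mathlib

section
/- Let U ≥ N ≥ 1 be integers. For every vector q = (q_1,...,q_U) ∈ ℝ^U that is feasible for the linear program ℙ (i.e., q_ℓ ≥ 0 for all ℓ, Σ_{ℓ=1}^U q_ℓ = 1, and q_ℓ·ℓ^{-1} ≤ N^{-1}·Σ_{ℓ'=1}^U q_{ℓ'}·(ℓ')^{-1} for all ℓ), the objective satisfies Σ_{ℓ=1}^U q_ℓ·ℓ² ≥ N(N+1)/2. In particular the vector q* with q*_ℓ = 2ℓ/(N(N+1)) for ℓ ≤ N and q*_ℓ = 0 for ℓ > N is an optimal solution of ℙ. -/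
/-- The candidate optimal solution of the linear program ℙ:
`q*_ℓ = 2ℓ/(N(N+1))` for `1 ≤ ℓ ≤ N` and `q*_ℓ = 0` for `ℓ > N`. -/
noncomputable def qStar (N : ℕ) (ℓ : ℕ) : ℝ :=
  if ℓ ≤ N then 2 * (ℓ : ℝ) / ((N : ℝ) * ((N : ℝ) + 1)) else 0

/-- Feasibility for the linear program ℙ: nonnegative coordinates summing to one,
with `q_ℓ ℓ⁻¹ ≤ N⁻¹ Σ_{ℓ'} q_{ℓ'} (ℓ')⁻¹` for every `ℓ ∈ {1,…,U}`. -/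
def Feasible (U N : ℕ) (q : ℕ → ℝ) : Prop :=
  (∀ ℓ ∈ Finset.Icc 1 U, 0 ≤ q ℓ) ∧
  (∑ ℓ ∈ Finset.Icc 1 U, q ℓ = 1) ∧
  (∀ ℓ ∈ Finset.Icc 1 U,
    q ℓ * (ℓ : ℝ)⁻¹ ≤ (N : ℝ)⁻¹ * ∑ ℓ' ∈ Finset.Icc 1 U, q ℓ' * (ℓ' : ℝ)⁻¹)

/-!
Substitute `x_ℓ = q_ℓ / ℓ` and `c = N⁻¹ Σ x_ℓ`: the constraints say `0 ≤ x_ℓ ≤ c` and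
`Σ x_ℓ = N c`, and the objective minus `N(N+1)/2` becomes `Σ x_ℓ f(ℓ)` with
`f(ℓ) = ℓ³ - (N(N+1)/2) ℓ`. On the naturals `f(ℓ) ≤ f(N)` for `ℓ ≤ N` and `f(ℓ) ≥ f(N)` for
`ℓ ≥ N`, so by the bathtub principle `Σ x_ℓ f(ℓ)` is smallest when `x` fills `{1,…,N}` up to
`c`, where it equals `c Σ_{ℓ ≤ N} f(ℓ) = 0` by Nicomachus' identity `Σ ℓ³ = (Σ ℓ)²`.
The vector `q*` is exactly this extremal filling.
-/

open Finset

section Bathtub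

variable {ι R : Type*} [DecidableEq ι] [CommRing R] [LinearOrder R] [IsOrderedRing R]

theorem mul_sum_le_sum_mul_of_bathtub {s t : Finset ι} (hst : s ⊆ t) {x f : ι → R} {c θ : R}
    (hx_nonneg : ∀ i ∈ t \ s, 0 ≤ x i) (hx_le : ∀ i ∈ s, x i ≤ c)
    (hx_sum : ∑ i ∈ t, x i = #s * c)
    (hf_le : ∀ i ∈ s, f i ≤ θ) (hf_ge : ∀ i ∈ t \ s, θ ≤ f i) :
    c * ∑ i ∈ s, f i ≤ ∑ i ∈ t, x i * f i := by
  have h_inside : ∑ i ∈ s, c * (f i - θ) ≤ ∑ i ∈ s, x i * (f i - θ) :=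
    sum_le_sum fun i hi => mul_le_mul_of_nonpos_right (hx_le i hi) (sub_nonpos.2 (hf_le i hi))
  have h_outside : 0 ≤ ∑ i ∈ t \ s, x i * (f i - θ) :=
    sum_nonneg fun i hi => mul_nonneg (hx_nonneg i hi) (sub_nonneg.2 (hf_ge i hi))
  have h_split : ∑ i ∈ t, x i * f i
      = ∑ i ∈ t \ s, x i * (f i - θ) + ∑ i ∈ s, x i * (f i - θ) + θ * ∑ i ∈ t, x i := by
    rw [sum_sdiff hst, mul_sum, ← sum_add_distrib]
    exact sum_congr rfl fun i _ => by ring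
  have h_const : c * ∑ i ∈ s, f i = ∑ i ∈ s, c * (f i - θ) + θ * ∑ i ∈ t, x i := by
    simp only [hx_sum, mul_sub, sum_sub_distrib, ← mul_sum, sum_const, nsmul_eq_mul]
    ring
  rw [h_split, h_const]
  exact add_le_add (h_inside.trans (le_add_of_nonneg_left h_outside)) le_rfl

end Bathtub

theorem sum_Icc_id_real (N : ℕ) : ∑ ℓ ∈ Icc 1 N, (ℓ : ℝ) = N * (N + 1) / 2 := by
  induction N with
  | zero => simp
  | succ n ih =>
    rw [sum_Icc_succ_top (by omega), ih]
    push_cast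
    ring

theorem sum_Icc_pow_three_real (N : ℕ) :
    ∑ ℓ ∈ Icc 1 N, (ℓ : ℝ) ^ 3 = (N * (N + 1) / 2) ^ 2 := by
  induction N with
  | zero => simp
  | succ n ih =>
    rw [sum_Icc_succ_top (by omega), ih]
    push_cast
    ring

section CubicGap

variable (N : ℕ)

noncomputable def cubicGap (ℓ : ℕ) : ℝ := (ℓ : ℝ) ^ 3 - N * (N + 1) / 2 * ℓ

theorem cubicGap_sub_cubicGap (ℓ : ℕ) :
    cubicGap N ℓ - cubicGap N N
      = ((ℓ : ℝ) - N) * ((ℓ : ℝ) ^ 2 + ℓ * N + N ^ 2 - N * (N + 1) / 2) := by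
  unfold cubicGap
  ring

theorem triangular_le_sq_add (ℓ : ℕ) :
    (N : ℝ) * (N + 1) / 2 ≤ (ℓ : ℝ) ^ 2 + ℓ * N + N ^ 2 := by
  have hN : (N : ℝ) ≤ (N : ℝ) ^ 2 := by exact_mod_cast Nat.le_self_pow two_ne_zero N
  have : (0 : ℝ) ≤ (ℓ : ℝ) ^ 2 + ℓ * N := by positivity
  linarith

theorem cubicGap_le_of_le {ℓ : ℕ} (h : ℓ ≤ N) : cubicGap N ℓ ≤ cubicGap N N := by
  have : ((ℓ : ℝ) - N) * ((ℓ : ℝ) ^ 2 + ℓ * N + N ^ 2 - N * (N + 1) / 2) ≤ 0 :=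
    mul_nonpos_of_nonpos_of_nonneg (sub_nonpos.2 (by exact_mod_cast h))
      (sub_nonneg.2 (triangular_le_sq_add N ℓ))
  linarith [cubicGap_sub_cubicGap N ℓ]

theorem le_cubicGap_of_le {ℓ : ℕ} (h : N ≤ ℓ) : cubicGap N N ≤ cubicGap N ℓ := by
  have : 0 ≤ ((ℓ : ℝ) - N) * ((ℓ : ℝ) ^ 2 + ℓ * N + N ^ 2 - N * (N + 1) / 2) :=
    mul_nonneg (sub_nonneg.2 (by exact_mod_cast h)) (sub_nonneg.2 (triangular_le_sq_add N ℓ))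
  linarith [cubicGap_sub_cubicGap N ℓ]

theorem sum_Icc_cubicGap : ∑ ℓ ∈ Icc 1 N, cubicGap N ℓ = 0 := by
  simp only [cubicGap, sum_sub_distrib, ← mul_sum, sum_Icc_id_real, sum_Icc_pow_three_real]
  ring

end CubicGap

theorem le_objective_of_feasible {U N : ℕ} (hN : 1 ≤ N) (hUN : N ≤ U) {q : ℕ → ℝ}
    (hq : Feasible U N q) :
    (N : ℝ) * (N + 1) / 2 ≤ ∑ ℓ ∈ Icc 1 U, q ℓ * (ℓ : ℝ) ^ 2 := by
  obtain ⟨hq_nonneg, hq_sum, hq_ratio⟩ := hq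
  set S := ∑ ℓ ∈ Icc 1 U, q ℓ * (ℓ : ℝ)⁻¹
  have hN0 : (N : ℝ) ≠ 0 := by positivity
  have hx_sum : S = #(Icc 1 N) * ((N : ℝ)⁻¹ * S) := by
    rw [Nat.card_Icc, Nat.add_sub_cancel, mul_inv_cancel_left₀ hN0]
  have h_bathtub := mul_sum_le_sum_mul_of_bathtub (Icc_subset_Icc_right hUN)
    (fun ℓ hℓ => mul_nonneg (hq_nonneg ℓ (sdiff_subset hℓ)) (by positivity))
    (fun ℓ hℓ => hq_ratio ℓ (Icc_subset_Icc_right hUN hℓ)) hx_sum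
    (fun ℓ hℓ => cubicGap_le_of_le N (mem_Icc.1 hℓ).2)
    (fun ℓ hℓ => le_cubicGap_of_le N (by simp only [mem_sdiff, mem_Icc] at hℓ; omega))
  have h_gap : ∑ ℓ ∈ Icc 1 U, q ℓ * (ℓ : ℝ)⁻¹ * cubicGap N ℓ
      = ∑ ℓ ∈ Icc 1 U, q ℓ * (ℓ : ℝ) ^ 2 - N * (N + 1) / 2 * ∑ ℓ ∈ Icc 1 U, q ℓ := by
    rw [mul_sum, ← sum_sub_distrib]
    refine sum_congr rfl fun ℓ hℓ => ?_
    have : (ℓ : ℝ) ≠ 0 := by have := (mem_Icc.1 hℓ).1; positivity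
    unfold cubicGap
    field_simp
  rw [sum_Icc_cubicGap, mul_zero, h_gap, hq_sum, mul_one] at h_bathtub
  linarith

theorem qStar_of_lt {N ℓ : ℕ} (h : N < ℓ) : qStar N ℓ = 0 := if_neg (by omega)

theorem sum_Icc_qStar_mul {U N : ℕ} (hUN : N ≤ U) (g : ℕ → ℝ) :
    ∑ ℓ ∈ Icc 1 U, qStar N ℓ * g ℓ = 2 / (N * (N + 1)) * ∑ ℓ ∈ Icc 1 N, ℓ * g ℓ := by
  rw [← sum_subset (Icc_subset_Icc_right hUN), mul_sum]
  · refine sum_congr rfl fun ℓ hℓ => ?_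
    rw [qStar, if_pos (mem_Icc.1 hℓ).2]
    ring
  · intro ℓ _ hℓ
    rw [qStar_of_lt (by simp only [mem_Icc] at *; omega), zero_mul]

theorem sum_Icc_qStar_mul_inv {U N : ℕ} (hN : 1 ≤ N) (hUN : N ≤ U) :
    ∑ ℓ ∈ Icc 1 U, qStar N ℓ * (ℓ : ℝ)⁻¹ = 2 / (N + 1) := by
  have h : ∑ ℓ ∈ Icc 1 N, (ℓ : ℝ) * (ℓ : ℝ)⁻¹ = N := by
    rw [sum_congr rfl fun ℓ hℓ => mul_inv_cancel₀ (by have := (mem_Icc.1 hℓ).1; positivity)]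
    simp
  have hN0 : (N : ℝ) ≠ 0 := by positivity
  rw [sum_Icc_qStar_mul hUN, h]
  field_simp

theorem qStar_mul_inv_le (N ℓ : ℕ) : qStar N ℓ * (ℓ : ℝ)⁻¹ ≤ 2 / (N * (N + 1)) := by
  unfold qStar
  split_ifs
  · rcases ℓ.eq_zero_or_pos with h | h
    · rw [h, Nat.cast_zero, inv_zero, mul_zero]
      positivity
    · rw [mul_div_right_comm, mul_inv_cancel_right₀ (by positivity)]
  · rw [zero_mul]; positivity

theorem qStar_feasible {U N : ℕ} (hN : 1 ≤ N) (hUN : N ≤ U) : Feasible U N (qStar N) := by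
  refine ⟨fun ℓ _ => ?_, ?_, fun ℓ _ => ?_⟩
  · unfold qStar; split_ifs <;> positivity
  · have hN0 : (N : ℝ) ≠ 0 := by positivity
    have h := sum_Icc_qStar_mul hUN 1
    simp only [Pi.one_apply, mul_one] at h
    rw [h, sum_Icc_id_real]
    field_simp
  · rw [sum_Icc_qStar_mul_inv hN hUN]
    convert qStar_mul_inv_le N ℓ using 1
    field_simp

theorem objective_qStar {U N : ℕ} (hUN : N ≤ U) :
    ∑ ℓ ∈ Icc 1 U, qStar N ℓ * (ℓ : ℝ) ^ 2 = N * (N + 1) / 2 := by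
  simp only [sum_Icc_qStar_mul hUN, ← pow_succ', sum_Icc_pow_three_real]
  rcases N.eq_zero_or_pos with hN | hN
  · simp [hN]
  · field_simp

/-- every feasible `q` has objective at least `N(N+1)/2`;
in particular `q*` is an optimal solution of ℙ. -/
theorem lp_lower_bound_and_qStar_optimal (U N : ℕ) (hN : 1 ≤ N) (hUN : N ≤ U) :
    (∀ q : ℕ → ℝ, Feasible U N q →
      (N : ℝ) * ((N : ℝ) + 1) / 2 ≤ ∑ ℓ ∈ Finset.Icc 1 U, q ℓ * (ℓ : ℝ) ^ 2) ∧
    Feasible U N (qStar N) ∧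
    (∀ q : ℕ → ℝ, Feasible U N q →
      ∑ ℓ ∈ Finset.Icc 1 U, qStar N ℓ * (ℓ : ℝ) ^ 2
        ≤ ∑ ℓ ∈ Finset.Icc 1 U, q ℓ * (ℓ : ℝ) ^ 2) := by
  exact ⟨fun q hq => le_objective_of_feasible hN hUN hq, qStar_feasible hN hUN,
    fun q hq => (objective_qStar hUN).trans_le (le_objective_of_feasible hN hUN hq)⟩
end

section
/- Let N ≥ 1 and let v ∈ ℝ^N satisfy |v_i| ≤ c for all i ∈ {1,...,N}, where c ≥ 0. Then for every i, |Softmax(v)_i − 1/N| ≤ (exp(2c) − 1)/N. -/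
/-!
Every term `exp (v j)` of the normalising sum lies in `[exp (-c), exp c]`, so the sum lies in
`[N exp (-c), N exp c]` and `Softmax(v)_i ∈ [exp (-2c) / N, exp (2c) / N]`. The distance to
`1 / N` is then at most `max (exp (2c) - 1, 1 - exp (-2c)) / N`, and the first term wins because
`exp t + exp (-t) ≥ 2`.
-/

/-- The softmax function on `ℝ^N`: `Softmax(v)_i = exp(v_i) / Σ_j exp(v_j)`. -/
noncomputable def softmax {N : ℕ} (v : Fin N → ℝ) (i : Fin N) : ℝ :=
  Real.exp (v i) / ∑ j, Real.exp (v j)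

open Real Finset Set

theorem one_sub_exp_neg_le_exp_sub_one (t : ℝ) : 1 - exp (-t) ≤ exp t - 1 := by
  linarith [add_one_le_exp t, add_one_le_exp (-t)]

theorem abs_sub_one_div_le_of_mem_Icc {x n t : ℝ} (hn : 0 ≤ n)
    (hx : x ∈ Icc (exp (-t) / n) (exp t / n)) : |x - 1 / n| ≤ (exp t - 1) / n := by
  rw [abs_sub_le_iff]
  constructor
  · calc x - 1 / n ≤ exp t / n - 1 / n := by linarith [hx.2]
      _ = (exp t - 1) / n := by ring
  · calc 1 / n - x ≤ 1 / n - exp (-t) / n := by linarith [hx.1]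
      _ = (1 - exp (-t)) / n := by ring
      _ ≤ (exp t - 1) / n :=
        div_le_div_of_nonneg_right (one_sub_exp_neg_le_exp_sub_one t) hn

theorem softmax_mem_Icc {N : ℕ} {v : Fin N → ℝ} {a b : ℝ} (hv : ∀ j, v j ∈ Icc a b)
    (i : Fin N) : softmax v i ∈ Icc (exp (a - b) / N) (exp (b - a) / N) := by
  have hN : (0 : ℝ) < N := by exact_mod_cast i.pos
  have hS_lower : N * exp a ≤ ∑ j, exp (v j) := by
    simpa using card_nsmul_le_sum univ (fun j ↦ exp (v j)) (exp a)
      fun j _ ↦ exp_le_exp.2 (hv j).1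
  have hS_upper : ∑ j, exp (v j) ≤ N * exp b := by
    simpa using sum_le_card_nsmul univ (fun j ↦ exp (v j)) (exp b)
      fun j _ ↦ exp_le_exp.2 (hv j).2
  constructor
  · calc exp (a - b) / N = exp a / (N * exp b) := by rw [exp_sub]; field_simp
      _ ≤ exp (v i) / ∑ j, exp (v j) :=
        div_le_div₀ (exp_pos _).le (exp_le_exp.2 (hv i).1)
          ((mul_pos hN (exp_pos a)).trans_le hS_lower) hS_upper
  · calc exp (v i) / ∑ j, exp (v j) ≤ exp b / (N * exp a) :=
          div_le_div₀ (exp_pos _).le (exp_le_exp.2 (hv i).2) (mul_pos hN (exp_pos a)) hS_lower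
      _ = exp (b - a) / N := by rw [exp_sub]; field_simp

theorem softmax_close_to_uniform_general (N : ℕ) (c : ℝ)
    (v : Fin N → ℝ) (hv : ∀ i, |v i| ≤ c) (i : Fin N) :
    |softmax v i - 1 / (N : ℝ)| ≤ (Real.exp (2 * c) - 1) / (N : ℝ) := by
  have hv' : ∀ j, v j ∈ Icc (-c) c := fun j ↦ abs_le.1 (hv j)
  have h := softmax_mem_Icc hv' i
  rw [show -c - c = -(2 * c) by ring, show c - -c = 2 * c by ring] at h
  exact abs_sub_one_div_le_of_mem_Icc N.cast_nonneg h

/-- if all entries of `v ∈ ℝ^N` are bounded by `c ≥ 0` in absolute value,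
then for every `i`, `|Softmax(v)_i − 1/N| ≤ (exp(2c) − 1)/N`. -/
theorem softmax_close_to_uniform (N : ℕ) (hN : 1 ≤ N) (c : ℝ) (hc : 0 ≤ c)
    (v : Fin N → ℝ) (hv : ∀ i, |v i| ≤ c) (i : Fin N) :
    |softmax v i - 1 / (N : ℝ)| ≤ (Real.exp (2 * c) - 1) / (N : ℝ) :=
  softmax_close_to_uniform_general N c v hv i
end
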